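/- Let 0<R<1, φ₀∈(0,π), p=(R cos φ₀, −R sin φ₀) and q=(R cos φ₀, R sin φ₀). Then there exists f∈ℝ² with |f|<1 such that |p|+|p−f|=1 and |q|+|q−f|=1 (i.e., p and q lie on a common ellipse with one focus at the origin and major axis of length 1) if and only if R sin φ₀ ≤ 1−R. Moreover, there exist two distinct such f if and only if R sin φ₀ < 1−R. -/

import Mathlib

noncomputable section
open Set Real Filter
open scoped RealInnerProductSpace

/-- The Euclidean plane. -/
abbrev E2 := EuclideanSpace ℝ (Fin 2)

/-- The point (a, b) of the Euclidean plane. -/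
def pt (a b : ℝ) : E2 := (WithLp.equiv 2 (Fin 2 → ℝ)).symm ![a, b]

lemma pt_sub (a b c d : ℝ) : pt a b - pt c d = pt (a-c) (b-d) := by
  ext i; fin_cases i <;> simp [pt]

lemma norm_pt (a b : ℝ) : ‖pt a b‖ = Real.sqrt (a^2 + b^2) := by
  simp [pt, EuclideanSpace.norm_eq, Fin.sum_univ_two, sq_abs]

set_option maxHeartbeats 1000000 in
/-- Two points p, q with |p| = |q| = R < 1 and half-angle φ₀ lie on a common ellipse with
one focus at the origin and major axis of length 1 iff R sin φ₀ ≤ 1 - R; there are two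
distinct such ellipses iff R sin φ₀ < 1 - R. -/
theorem common_ellipse_iff (R φ₀ : ℝ) (hR0 : 0 < R) (hR1 : R < 1) (hφ : φ₀ ∈ Ioo 0 π)
    (p q : E2) (hp : p = pt (R * cos φ₀) (-(R * sin φ₀)))
    (hq : q = pt (R * cos φ₀) (R * sin φ₀)) :
    ((∃ f : E2, ‖f‖ < 1 ∧ ‖p‖ + ‖p - f‖ = 1 ∧ ‖q‖ + ‖q - f‖ = 1) ↔
      R * sin φ₀ ≤ 1 - R) ∧
    ((∃ f g : E2, f ≠ g ∧ ‖f‖ < 1 ∧ ‖g‖ < 1 ∧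
        (‖p‖ + ‖p - f‖ = 1) ∧ (‖q‖ + ‖q - f‖ = 1) ∧
        (‖p‖ + ‖p - g‖ = 1) ∧ (‖q‖ + ‖q - g‖ = 1)) ↔
      R * sin φ₀ < 1 - R) := by
  have hsin : 0 < sin φ₀ := Real.sin_pos_of_pos_of_lt_pi hφ.1 hφ.2
  have hsin1 : sin φ₀ ≤ 1 := Real.sin_le_one φ₀
  have hcos : |cos φ₀| < 1 := by
    rw [abs_lt]
    constructor
    · rcases lt_or_ge (cos φ₀) 0 with h | h
      · nlinarith [Real.sin_sq_add_cos_sq φ₀]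
      · linarith
    · rcases lt_or_ge (cos φ₀) 0 with h | h
      · linarith
      · nlinarith [Real.sin_sq_add_cos_sq φ₀]
  have hpyth : (R * cos φ₀)^2 + (R * sin φ₀)^2 = R^2 := by
    have := Real.sin_sq_add_cos_sq φ₀; nlinarith
  have hnp : ‖p‖ = R := by
    rw [hp, norm_pt, neg_pow, neg_one_pow_eq_one_iff_even (by norm_num) |>.mpr (by norm_num),
      one_mul]
    rw [hpyth, Real.sqrt_sq hR0.le]
  have hnq : ‖q‖ = R := by
    rw [hq, norm_pt, hpyth, Real.sqrt_sq hR0.le]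
  have hR1' : (0:ℝ) < 1 - R := by linarith
  have hRs : 0 < R * sin φ₀ := by positivity
  -- the circle intersection points
  set s : ℝ := Real.sqrt ((1-R)^2 - (R * sin φ₀)^2) with hs_def
  -- key construction: given the inequality, an explicit focus works
  have key : ∀ t : ℝ, t^2 = (1-R)^2 - (R * sin φ₀)^2 → |t| ≤ 1 - R →
      ‖pt (R * cos φ₀ + t) 0‖ < 1 ∧
      ‖p‖ + ‖p - pt (R * cos φ₀ + t) 0‖ = 1 ∧
      ‖q‖ + ‖q - pt (R * cos φ₀ + t) 0‖ = 1 := by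
    intro t ht htle
    refine ⟨?_, ?_, ?_⟩
    · rw [norm_pt]
      have : Real.sqrt ((R * cos φ₀ + t)^2 + 0^2) = |R * cos φ₀ + t| := by
        rw [← Real.sqrt_sq_eq_abs]; ring_nf
      rw [this]
      calc |R * cos φ₀ + t| ≤ |R * cos φ₀| + |t| := abs_add_le _ _
        _ = R * |cos φ₀| + |t| := by rw [abs_mul, abs_of_pos hR0]
        _ < R * 1 + (1 - R) := by
            have : R * |cos φ₀| < R * 1 := by nlinarith
            linarith
        _ = 1 := by ring
    · rw [hnp, hp, pt_sub, norm_pt]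
      have : (R * cos φ₀ - (R * cos φ₀ + t))^2 + (-(R * sin φ₀) - 0)^2 = (1-R)^2 := by
        ring_nf; nlinarith
      rw [this, Real.sqrt_sq hR1'.le]; ring
    · rw [hnq, hq, pt_sub, norm_pt]
      have : (R * cos φ₀ - (R * cos φ₀ + t))^2 + (R * sin φ₀ - 0)^2 = (1-R)^2 := by
        ring_nf; nlinarith
      rw [this, Real.sqrt_sq hR1'.le]; ring
  -- forward direction of the first part
  have fwd : (∃ f : E2, ‖f‖ < 1 ∧ ‖p‖ + ‖p - f‖ = 1 ∧ ‖q‖ + ‖q - f‖ = 1) →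
      R * sin φ₀ ≤ 1 - R := by
    rintro ⟨f, _, h1, h2⟩
    have hpf : ‖p - f‖ = 1 - R := by rw [hnp] at h1; linarith
    have hqf : ‖q - f‖ = 1 - R := by rw [hnq] at h2; linarith
    have hpq : ‖p - q‖ = 2 * (R * sin φ₀) := by
      rw [hp, hq, pt_sub, norm_pt]
      have : (R * cos φ₀ - R * cos φ₀)^2 + (-(R * sin φ₀) - R * sin φ₀)^2
          = (2 * (R * sin φ₀))^2 := by ring
      rw [this, Real.sqrt_sq (by positivity)]
    have : ‖p - q‖ ≤ ‖p - f‖ + ‖f - q‖ := norm_sub_le_norm_sub_add_norm_sub p f q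
    rw [norm_sub_rev f q] at this
    rw [hpq, hpf, hqf] at this
    linarith
  constructor
  · constructor
    · exact fwd
    · intro h
      have hsq : (R * sin φ₀)^2 ≤ (1-R)^2 := by nlinarith
      have hs2 : s^2 = (1-R)^2 - (R * sin φ₀)^2 := Real.sq_sqrt (by linarith)
      have hsle : |s| ≤ 1 - R := by
        rw [abs_of_nonneg (Real.sqrt_nonneg _)]
        calc Real.sqrt ((1-R)^2 - (R * sin φ₀)^2) ≤ Real.sqrt ((1-R)^2) :=
              Real.sqrt_le_sqrt (by nlinarith [sq_nonneg (R * sin φ₀)])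
          _ = 1 - R := Real.sqrt_sq hR1'.le
      exact ⟨_, key s hs2 hsle⟩
  · constructor
    · rintro ⟨f, g, hfg, hf1, hg1, hpf, hqf, hpg, hqg⟩
      have hle := fwd ⟨f, hf1, hpf, hqf⟩
      rcases lt_or_eq_of_le hle with h | h
      · exact h
      exfalso
      -- equality case: f and g are both the midpoint of p q
      have hpq : dist p q = 2 * (1 - R) := by
        rw [dist_eq_norm, hp, hq, pt_sub, norm_pt]
        have : (R * cos φ₀ - R * cos φ₀)^2 + (-(R * sin φ₀) - R * sin φ₀)^2
            = (2 * (R * sin φ₀))^2 := by ring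
        rw [this, Real.sqrt_sq (by positivity), ← h]
      have hmid : ∀ x : E2, ‖p‖ + ‖p - x‖ = 1 → ‖q‖ + ‖q - x‖ = 1 →
          x = midpoint ℝ p q := by
        intro x h1 h2
        apply eq_midpoint_of_dist_eq_half
        · rw [dist_eq_norm, hpq]; rw [hnp] at h1; linarith
        · rw [dist_eq_norm, hpq, norm_sub_rev]; rw [hnq] at h2; linarith
      exact hfg ((hmid f hpf hqf).trans (hmid g hpg hqg).symm)
    · intro h
      have hsq : (R * sin φ₀)^2 < (1-R)^2 := by nlinarith
      have hs2 : s^2 = (1-R)^2 - (R * sin φ₀)^2 := Real.sq_sqrt (by linarith)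
      have hspos : 0 < s := Real.sqrt_pos.mpr (by linarith)
      have hsle : |s| ≤ 1 - R := by
        rw [abs_of_nonneg hspos.le]
        calc Real.sqrt ((1-R)^2 - (R * sin φ₀)^2) ≤ Real.sqrt ((1-R)^2) :=
              Real.sqrt_le_sqrt (by nlinarith [sq_nonneg (R * sin φ₀)])
          _ = 1 - R := Real.sqrt_sq hR1'.le
      have hsle' : |(-s)| ≤ 1 - R := by rw [abs_neg]; exact hsle
      obtain ⟨hA1, hA2, hA3⟩ := key s hs2 hsle
      obtain ⟨hB1, hB2, hB3⟩ := key (-s) (by rw [neg_pow]; simpa using hs2) hsle'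
      refine ⟨pt (R * cos φ₀ + s) 0, pt (R * cos φ₀ + (-s)) 0, ?_,
        hA1, hB1, hA2, hA3, hB2, hB3⟩
      intro hcontra
      have : R * cos φ₀ + s = R * cos φ₀ + (-s) := congrArg (fun v : E2 => v 0) hcontra
      linarith
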